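/- Collapse of the wave function for general nondestructive measurement: let ψ_i and ψ_j be orthonormal vectors in H whose rank-one projections P_i := |ψ_i⟩⟨ψ_i| and P_j := |ψ_j⟩⟨ψ_j| satisfy R(P_i) = P_i and R(P_j) = P_j (nondestructiveness). Let Q ∈ B(K) be an orthogonal projection and E ∈ B(H) an orthogonal projection with E ψ_i = ψ_i and E ψ_j = 0, and suppose ‖T(1 ⊗ Q) − E‖ ≤ δ with δ ∈ [0, 1/2]. Then for every orthogonal projection P ∈ B(H), |⟨ψ_i, R(P) ψ_j⟩| ≤ √(δ(1 − δ)). -/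

import Mathlib

open ContinuousLinearMap

/-! The Hilbert tensor product `H ⊗ K` is modelled by a Hilbert space `L` together
with two commuting unital ⋆-homomorphisms `ι₁ : B(H) → B(L)` and `ι₂ : B(K) → B(L)`
(playing the roles of `X ↦ X ⊗ 1` and `Y ↦ 1 ⊗ Y`). Given an isometry
`V : H → L`, the quantum operation is `T(X) = V† X V` and its restriction to the
system is `R(P) = T(ι₁ P)`. -/

variable {H K L : Type*}
  [NormedAddCommGroup H] [InnerProductSpace ℂ H] [CompleteSpace H]
  [NormedAddCommGroup K] [InnerProductSpace ℂ K] [CompleteSpace K]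
  [NormedAddCommGroup L] [InnerProductSpace ℂ L] [CompleteSpace L]

/-- The quantum operation `T(X) = V† X V` in Stinespring form. -/
noncomputable def qop (V : H →L[ℂ] L) (X : L →L[ℂ] L) : H →L[ℂ] H :=
  adjoint V ∘L X ∘L V

open scoped InnerProductSpace

/-!
Conjugating by the isometry `V`, nondestructiveness says that the projections `ι₁ Pᵢ` and `ι₁ Pⱼ`
fix `Vψᵢ` and `Vψⱼ`. Since `Pᵢ P Pⱼ = ⟨ψᵢ, P ψⱼ⟩ |ψᵢ⟩⟨ψⱼ|`, the matrix element `⟨ψᵢ, R(P) ψⱼ⟩`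
factors as `⟨ψᵢ, P ψⱼ⟩ ⟨Vψᵢ, ι₁ |ψᵢ⟩⟨ψⱼ| Vψⱼ⟩`. The first factor is at most `1/2` for any
projection and orthonormal pair. The contraction `ι₁ |ψᵢ⟩⟨ψⱼ|` commutes with the pointer
projection `ι₂ Q`, so the second factor is at most `‖QVψᵢ‖‖QVψⱼ‖ + ‖Q⊥Vψᵢ‖‖Q⊥Vψⱼ‖`, while the
infidelity bound gives `‖Q⊥Vψᵢ‖², ‖QVψⱼ‖² ≤ δ`; together these bound it by `2√(δ(1-δ))`.
-/

open InnerProductSpace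

namespace IsStarProjection

variable {𝕜 E : Type*} [RCLike 𝕜] [NormedAddCommGroup E] [InnerProductSpace 𝕜 E] [CompleteSpace E]
  {p : E →L[𝕜] E}

theorem inner_apply_apply (hp : IsStarProjection p) (x y : E) : ⟪p x, p y⟫_𝕜 = ⟪x, p y⟫_𝕜 := by
  rw [← adjoint_inner_right, hp.isSelfAdjoint.adjoint_eq, ← mul_apply_eq_comp,
    hp.isIdempotentElem.eq]

theorem inner_apply_self (hp : IsStarProjection p) (x : E) :
    ⟪x, p x⟫_𝕜 = ((‖p x‖ ^ 2 : ℝ) : 𝕜) := by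
  rw [← hp.inner_apply_apply, inner_self_eq_norm_sq_to_K]; norm_cast

theorem norm_sq_apply_add_norm_sq_one_sub_apply (hp : IsStarProjection p) (x : E) :
    ‖p x‖ ^ 2 + ‖(1 - p) x‖ ^ 2 = ‖x‖ ^ 2 := by
  have h := congrArg RCLike.re (inner_add_right (𝕜 := 𝕜) x (p x) ((1 - p) x))
  rw [hp.inner_apply_self, hp.one_sub.inner_apply_self, sub_apply,
    one_apply_eq_self, add_sub_cancel, inner_self_eq_norm_sq_to_K] at h
  simpa using h.symm

theorem apply_eq_self_of_norm_apply (hp : IsStarProjection p) {x : E} (h : ‖p x‖ = ‖x‖) :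
    p x = x := by
  have := hp.norm_sq_apply_add_norm_sq_one_sub_apply x
  rw [h, add_eq_left, sq_eq_zero_iff, norm_eq_zero, sub_apply, one_apply_eq_self,
    sub_eq_zero] at this
  exact this.symm

theorem norm_inner_apply_le_half (hp : IsStarProjection p) {x y : E} (hx : ‖x‖ = 1)
    (hy : ‖y‖ = 1) (hxy : ⟪x, y⟫_𝕜 = 0) : ‖⟪x, p y⟫_𝕜‖ ≤ 1 / 2 := by
  have h₁ : ‖⟪x, p y⟫_𝕜‖ ≤ ‖p x‖ * ‖p y‖ := by
    rw [← hp.inner_apply_apply]; exact norm_inner_le_norm _ _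
  have h₂ : ‖⟪x, p y⟫_𝕜‖ ≤ ‖(1 - p) x‖ * ‖(1 - p) y‖ := by
    have : ⟪x, p y⟫_𝕜 = -⟪(1 - p) x, (1 - p) y⟫_𝕜 := by
      rw [hp.one_sub.inner_apply_apply, sub_apply, one_apply_eq_self,
        inner_sub_right, hxy, zero_sub, neg_neg]
    rw [this, norm_neg]; exact norm_inner_le_norm _ _
  have amgm : ∀ z : E, ‖z‖ = 1 → ‖p z‖ * ‖(1 - p) z‖ ≤ 1 / 2 := fun z hz => by
    nlinarith [hp.norm_sq_apply_add_norm_sq_one_sub_apply z, sq_nonneg (‖p z‖ - ‖(1 - p) z‖)]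
  have hsq : ‖⟪x, p y⟫_𝕜‖ ^ 2 ≤ (1 / 2) ^ 2 :=
    calc ‖⟪x, p y⟫_𝕜‖ ^ 2 ≤ (‖p x‖ * ‖p y‖) * (‖(1 - p) x‖ * ‖(1 - p) y‖) := by
          rw [sq]; exact mul_le_mul h₁ h₂ (norm_nonneg _) (by positivity)
      _ = (‖p x‖ * ‖(1 - p) x‖) * (‖p y‖ * ‖(1 - p) y‖) := by ring
      _ ≤ 1 / 2 * (1 / 2) := mul_le_mul (amgm x hx) (amgm y hy) (by positivity) (by norm_num)
      _ = (1 / 2) ^ 2 := by norm_num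
  exact pow_le_pow_iff_left₀ (norm_nonneg _) (by norm_num) two_ne_zero |>.mp hsq

theorem inner_apply_apply_of_commute (hp : IsStarProjection p) {X : E →L[𝕜] E}
    (hX : Commute X p) (x y : E) : ⟪p x, X (p y)⟫_𝕜 = ⟪x, X (p y)⟫_𝕜 := by
  rw [← adjoint_inner_right, hp.isSelfAdjoint.adjoint_eq, ← mul_apply_eq_comp,
    ← mul_apply_eq_comp, ← hX.eq, mul_assoc, hp.isIdempotentElem.eq, mul_apply_eq_comp]

theorem norm_inner_apply_le_of_commute (hp : IsStarProjection p) {X : E →L[𝕜] E}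
    (hX : Commute X p) (x y : E) :
    ‖⟪x, X y⟫_𝕜‖ ≤ ‖X‖ * (‖p x‖ * ‖p y‖ + ‖(1 - p) x‖ * ‖(1 - p) y‖) := by
  have bound : ∀ u v : E, ‖⟪u, X v⟫_𝕜‖ ≤ ‖X‖ * (‖u‖ * ‖v‖) := fun u v =>
    calc ‖⟪u, X v⟫_𝕜‖ ≤ ‖u‖ * (‖X‖ * ‖v‖) :=
          (norm_inner_le_norm _ _).trans (by gcongr; exact X.le_opNorm v)
      _ = ‖X‖ * (‖u‖ * ‖v‖) := by ring
  have split : ⟪x, X y⟫_𝕜 = ⟪p x, X (p y)⟫_𝕜 + ⟪(1 - p) x, X ((1 - p) y)⟫_𝕜 := by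
    rw [hp.inner_apply_apply_of_commute hX, hp.one_sub.inner_apply_apply_of_commute
      ((Commute.one_right X).sub_right hX), ← inner_add_right, ← map_add, sub_apply,
      one_apply_eq_self, add_sub_cancel]
  rw [split, mul_add]
  exact (norm_add_le _ _).trans (add_le_add (bound _ _) (bound _ _))

end IsStarProjection

section RankOne

variable {𝕜 E : Type*} [RCLike 𝕜] [NormedAddCommGroup E] [InnerProductSpace 𝕜 E]

theorem rankOne_self_mul_mul_rankOne_self (x y : E) (P : E →L[𝕜] E) :
    rankOne 𝕜 x x * P * rankOne 𝕜 y y = ⟪x, P y⟫_𝕜 • rankOne 𝕜 x y := by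
  rw [mul_def, mul_def, comp_assoc, comp_rankOne, rankOne_comp_rankOne]

variable [CompleteSpace E] {F : Type*} [NormedAddCommGroup F] [InnerProductSpace 𝕜 F]
  [CompleteSpace F]

theorem inner_map_apply_eq_of_map_rankOne_self_apply
    (ι : (E →L[𝕜] E) →⋆ₐ[𝕜] (F →L[𝕜] F)) {x y : E} {u v : F}
    (hu : ι (rankOne 𝕜 x x) u = u) (hv : ι (rankOne 𝕜 y y) v = v) (P : E →L[𝕜] E) :
    ⟪u, ι P v⟫_𝕜 = ⟪x, P y⟫_𝕜 * ⟪u, ι (rankOne 𝕜 x y) v⟫_𝕜 := by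
  have hsa : IsSelfAdjoint (ι (rankOne 𝕜 x x)) :=
    (isSelfAdjoint_iff'.mpr (adjoint_rankOne x x)).map ι
  calc ⟪u, ι P v⟫_𝕜 = ⟪ι (rankOne 𝕜 x x) u, ι P (ι (rankOne 𝕜 y y) v)⟫_𝕜 := by rw [hu, hv]
    _ = ⟪u, ι (rankOne 𝕜 x x * P * rankOne 𝕜 y y) v⟫_𝕜 := by
      rw [← adjoint_inner_right, hsa.adjoint_eq, map_mul, map_mul, mul_apply_eq_comp,
        mul_apply_eq_comp]
    _ = ⟪x, P y⟫_𝕜 * ⟪u, ι (rankOne 𝕜 x y) v⟫_𝕜 := by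
      rw [rankOne_self_mul_mul_rankOne_self, map_smul, smul_apply, inner_smul_right]

end RankOne

section Stinespring

variable (V : H →L[ℂ] L)

theorem inner_qop_apply (X : L →L[ℂ] L) (x y : H) : ⟪x, qop V X y⟫_ℂ = ⟪V x, X (V y)⟫_ℂ :=
  adjoint_inner_right V x (X (V y))

variable {V}

theorem qop_one (hV : adjoint V ∘L V = 1) : qop V 1 = 1 := by
  rw [qop, one_def, id_comp, hV]

theorem qop_one_sub (hV : adjoint V ∘L V = 1) (X : L →L[ℂ] L) :
    qop V (1 - X) = 1 - qop V X := by
  rw [← qop_one hV, qop, qop, qop, sub_comp, comp_sub]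

theorem norm_apply_of_adjoint_comp_self (hV : adjoint V ∘L V = 1) (x : H) : ‖V x‖ = ‖x‖ := by
  have h : ‖V x‖ ^ 2 = ‖x‖ ^ 2 := by
    rw [← inner_self_eq_norm_sq (𝕜 := ℂ), ← adjoint_inner_right, ← comp_apply, hV,
      one_apply_eq_self, inner_self_eq_norm_sq]
  exact (sq_eq_sq₀ (norm_nonneg _) (norm_nonneg _)).mp h

namespace IsStarProjection

variable {A : L →L[ℂ] L}

theorem norm_sq_apply_eq_re_inner_qop (hA : IsStarProjection A) (x : H) :
    ‖A (V x)‖ ^ 2 = RCLike.re ⟪x, qop V A x⟫_ℂ := by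
  rw [inner_qop_apply, hA.inner_apply_self, RCLike.ofReal_re]

theorem apply_eq_self_of_qop_apply (hV : adjoint V ∘L V = 1) (hA : IsStarProjection A) {x : H}
    (h : qop V A x = x) : A (V x) = V x := by
  refine hA.apply_eq_self_of_norm_apply <| (sq_eq_sq₀ (norm_nonneg _) (norm_nonneg _)).mp ?_
  rw [hA.norm_sq_apply_eq_re_inner_qop, h, norm_apply_of_adjoint_comp_self hV,
    inner_self_eq_norm_sq]

theorem norm_sq_apply_le_of_norm_qop_sub_le (hA : IsStarProjection A) {E : H →L[ℂ] H} {δ : ℝ}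
    (hδ : ‖qop V A - E‖ ≤ δ) {x : H} (hx : ‖x‖ = 1) (hE : E x = 0) : ‖A (V x)‖ ^ 2 ≤ δ :=
  calc ‖A (V x)‖ ^ 2 = RCLike.re ⟪x, (qop V A - E) x⟫_ℂ := by
        rw [hA.norm_sq_apply_eq_re_inner_qop, sub_apply, hE, sub_zero]
    _ ≤ ‖x‖ * (‖qop V A - E‖ * ‖x‖) :=
        (re_inner_le_norm _ _).trans (by gcongr; exact le_opNorm _ _)
    _ ≤ δ := by simpa [hx] using hδ

theorem norm_sq_one_sub_apply_le_of_norm_qop_sub_le (hV : adjoint V ∘L V = 1)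
    (hA : IsStarProjection A) {E : H →L[ℂ] H} {δ : ℝ} (hδ : ‖qop V A - E‖ ≤ δ) {x : H}
    (hx : ‖x‖ = 1) (hE : E x = x) : ‖(1 - A) (V x)‖ ^ 2 ≤ δ := by
  refine hA.one_sub.norm_sq_apply_le_of_norm_qop_sub_le (E := 1 - E) ?_ hx ?_
  · rwa [qop_one_sub hV, sub_sub_sub_cancel_left, norm_sub_rev]
  · rw [sub_apply, hE, one_apply_eq_self, sub_self]

end IsStarProjection

end Stinespring

-- With `a = cos θ, u = sin θ, b = sin φ, v = cos φ` this is `sin (θ + φ) ≤ sin (2 arcsin √δ)`.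
theorem mul_add_mul_le_two_sqrt_mul_one_sub {a b u v δ : ℝ} (hau : a ^ 2 + u ^ 2 = 1)
    (hbv : b ^ 2 + v ^ 2 = 1) (huδ : u ^ 2 ≤ δ) (hbδ : b ^ 2 ≤ δ) (hδ : δ ≤ 1 / 2) :
    a * b + u * v ≤ 2 * Real.sqrt (δ * (1 - δ)) := by
  have hδ₀ : 0 ≤ δ := (sq_nonneg b).trans hbδ
  have hr := Real.sq_sqrt (mul_nonneg hδ₀ (by linarith : 0 ≤ 1 - δ))
  have hsq : (a * b + u * v) ^ 2 ≤ (2 * Real.sqrt (δ * (1 - δ))) ^ 2 := by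
    nlinarith [sq_nonneg (a * b - u * v), mul_nonneg (sub_nonneg.2 huδ)
      (by nlinarith : (0 : ℝ) ≤ 1 - 2 * b ^ 2), mul_nonneg (sub_nonneg.2 hbδ)
      (by linarith : (0 : ℝ) ≤ 1 - 2 * δ), sq_nonneg u, sq_nonneg b]
  exact abs_le_of_sq_le_sq' hsq (by positivity) |>.2

theorem collapse_general_nondestructive_general
    (ι₁ : (H →L[ℂ] H) →⋆ₐ[ℂ] (L →L[ℂ] L)) (ι₂ : (K →L[ℂ] K) →⋆ₐ[ℂ] (L →L[ℂ] L))
    (hcomm : ∀ X Y, ι₁ X * ι₂ Y = ι₂ Y * ι₁ X)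
    (V : H →L[ℂ] L) (hV : adjoint V ∘L V = 1)
    (ψi ψj : H) (hψi : ‖ψi‖ = 1) (hψj : ‖ψj‖ = 1) (hperp : ⟪ψi, ψj⟫_ℂ = 0)
    (hfixi : qop V (ι₁ ((innerSL ℂ ψi).smulRight ψi)) = (innerSL ℂ ψi).smulRight ψi)
    (hfixj : qop V (ι₁ ((innerSL ℂ ψj).smulRight ψj)) = (innerSL ℂ ψj).smulRight ψj)
    (Q : K →L[ℂ] K) (hQproj : IsIdempotentElem Q) (hQsa : IsSelfAdjoint Q)
    (E : H →L[ℂ] H) (hEi : E ψi = ψi) (hEj : E ψj = 0)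
    (δ : ℝ) (hδ : δ ∈ Set.Icc (0 : ℝ) (1 / 2))
    (hinfid : ‖qop V (ι₂ Q) - E‖ ≤ δ) :
    ∀ P : H →L[ℂ] H, IsIdempotentElem P → IsSelfAdjoint P →
      ‖⟪ψi, qop V (ι₁ P) ψj⟫_ℂ‖ ≤ Real.sqrt (δ * (1 - δ)) := by
  intro P hPproj hPsa
  rw [← rankOne_def] at hfixi hfixj
  have fixed : ∀ ψ : H, ‖ψ‖ = 1 → qop V (ι₁ (rankOne ℂ ψ ψ)) = rankOne ℂ ψ ψ →
      ι₁ (rankOne ℂ ψ ψ) (V ψ) = V ψ := fun ψ hψ hfix =>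
    ((isStarProjection_rankOne_self hψ).map ι₁).apply_eq_self_of_qop_apply hV
      (by simp [hfix, inner_self_eq_norm_sq_to_K, hψ])
  have hQ : IsStarProjection (ι₂ Q) := IsStarProjection.map ⟨hQproj, hQsa⟩ ι₂
  have hc : ‖⟪ψi, P ψj⟫_ℂ‖ ≤ 1 / 2 :=
    IsStarProjection.norm_inner_apply_le_half ⟨hPproj, hPsa⟩ hψi hψj hperp
  have hS : ‖ι₁ (rankOne ℂ ψi ψj)‖ ≤ 1 := by
    simpa [hψi, hψj] using NonUnitalStarAlgHom.norm_apply_le ι₁ (rankOne ℂ ψi ψj)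
  have hsplit := hQ.norm_inner_apply_le_of_commute (hcomm (rankOne ℂ ψi ψj) Q) (V ψi) (V ψj)
  have hpyth : ∀ ψ : H, ‖ψ‖ = 1 → ‖ι₂ Q (V ψ)‖ ^ 2 + ‖(1 - ι₂ Q) (V ψ)‖ ^ 2 = 1 := by
    intro ψ hψ
    rw [hQ.norm_sq_apply_add_norm_sq_one_sub_apply, norm_apply_of_adjoint_comp_self hV, hψ,
      one_pow]
  have hnum := mul_add_mul_le_two_sqrt_mul_one_sub (hpyth ψi hψi) (hpyth ψj hψj)
    (hQ.norm_sq_one_sub_apply_le_of_norm_qop_sub_le hV hinfid hψi hEi)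
    (hQ.norm_sq_apply_le_of_norm_qop_sub_le hinfid hψj hEj) hδ.2
  rw [inner_qop_apply, inner_map_apply_eq_of_map_rankOne_self_apply ι₁ (fixed ψi hψi hfixi)
    (fixed ψj hψj hfixj), norm_mul]
  calc ‖⟪ψi, P ψj⟫_ℂ‖ * ‖⟪V ψi, ι₁ (rankOne ℂ ψi ψj) (V ψj)⟫_ℂ‖
      ≤ 1 / 2 * (1 * (2 * Real.sqrt (δ * (1 - δ)))) :=
        mul_le_mul hc (hsplit.trans (mul_le_mul hS hnum (by positivity) zero_le_one))
          (norm_nonneg _) (by norm_num)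
    _ = Real.sqrt (δ * (1 - δ)) := by ring

/-- Collapse of the wave function for general nondestructive measurement: if the
rank-one projections `Pᵢ = |ψᵢ⟩⟨ψᵢ|` and `Pⱼ = |ψⱼ⟩⟨ψⱼ|` onto orthonormal vectors
`ψᵢ, ψⱼ` are fixed by `R`, `Q` is a pointer projection, `E` a projection with
`E ψᵢ = ψᵢ`, `E ψⱼ = 0`, and `‖T(1 ⊗ Q) − E‖ ≤ δ ≤ 1/2`, then every orthogonal
projection `P` satisfies `|⟨ψᵢ, R(P) ψⱼ⟩| ≤ √(δ(1 − δ))`. -/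
theorem collapse_general_nondestructive
    (ι₁ : (H →L[ℂ] H) →⋆ₐ[ℂ] (L →L[ℂ] L)) (ι₂ : (K →L[ℂ] K) →⋆ₐ[ℂ] (L →L[ℂ] L))
    (hcomm : ∀ X Y, ι₁ X * ι₂ Y = ι₂ Y * ι₁ X)
    (V : H →L[ℂ] L) (hV : adjoint V ∘L V = 1)
    (ψi ψj : H) (hψi : ‖ψi‖ = 1) (hψj : ‖ψj‖ = 1) (hperp : ⟪ψi, ψj⟫_ℂ = 0)
    (hfixi : qop V (ι₁ ((innerSL ℂ ψi).smulRight ψi)) = (innerSL ℂ ψi).smulRight ψi)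
    (hfixj : qop V (ι₁ ((innerSL ℂ ψj).smulRight ψj)) = (innerSL ℂ ψj).smulRight ψj)
    (Q : K →L[ℂ] K) (hQproj : IsIdempotentElem Q) (hQsa : IsSelfAdjoint Q)
    (E : H →L[ℂ] H) (hEproj : IsIdempotentElem E) (hEsa : IsSelfAdjoint E)
    (hEi : E ψi = ψi) (hEj : E ψj = 0)
    (δ : ℝ) (hδ : δ ∈ Set.Icc (0 : ℝ) (1 / 2))
    (hinfid : ‖qop V (ι₂ Q) - E‖ ≤ δ) :
    ∀ P : H →L[ℂ] H, IsIdempotentElem P → IsSelfAdjoint P →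
      ‖⟪ψi, qop V (ι₁ P) ψj⟫_ℂ‖ ≤ Real.sqrt (δ * (1 - δ)) :=
  collapse_general_nondestructive_general ι₁ ι₂ hcomm V hV ψi ψj hψi hψj hperp hfixi hfixj Q hQproj
    hQsa E hEi hEj δ hδ hinfid
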